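/- arXiv:2109.04258 — 2 statements merged into one kernel-verified Lean document; each statement's English description precedes it below -/
import Mathlib

section
/- Correctness of the return-symbol derivative: for any return symbol b› ∈ Σ_r, PDA states S, S₁, call symbol ‹a, stack T, and terminal string w, if δ_b›(S, [S₁, ‹a]) = (S', tail), then (S, [S₁, ‹a]·T) ⇝ b› w if and only if (S', T) ⇝ w. -/
namespace VPG

/-- Terminals of a visibly pushdown grammar: plain, call, and return symbols. -/
inductive VTerm (Pl Ca Re : Type) : Type
  | pl : Pl → VTerm Pl Ca Re
  | ca : Ca → VTerm Pl Ca Re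
  | re : Re → VTerm Pl Ca Re

/-- Grammar symbols: terminals or nonterminals. -/
inductive VSym (N Pl Ca Re : Type) : Type
  | t : VTerm Pl Ca Re → VSym N Pl Ca Re
  | nt : N → VSym N Pl Ca Re

/-- Production rules of a well-matched VPG. -/
inductive WRule (N Pl Ca Re : Type) : Type
  | eps (L : N)
  | plain (L : N) (c : Pl) (L1 : N)
  | mat (L : N) (a : Ca) (L1 : N) (b : Re) (L2 : N)

variable {N Pl Ca Re : Type}

def WRule.lhs : WRule N Pl Ca Re → N
  | .eps L => L
  | .plain L _ _ => L
  | .mat L _ _ _ _ => L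

def WRule.rhs : WRule N Pl Ca Re → List (VSym N Pl Ca Re)
  | .eps _ => []
  | .plain _ c L1 => [.t (.pl c), .nt L1]
  | .mat _ a L1 b L2 => [.t (.ca a), .nt L1, .t (.re b), .nt L2]

/-- One derivation step of the context-free derivation relation. -/
inductive Derives1 (P : Set (WRule N Pl Ca Re)) :
    List (VSym N Pl Ca Re) → List (VSym N Pl Ca Re) → Prop
  | step (r : WRule N Pl Ca Re) (hr : r ∈ P) (pre post : List (VSym N Pl Ca Re)) :
      Derives1 P (pre ++ VSym.nt r.lhs :: post) (pre ++ r.rhs ++ post)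

/-- The usual (reflexive-transitive) context-free derivation relation. -/
def Derives (P : Set (WRule N Pl Ca Re)) :
    List (VSym N Pl Ca Re) → List (VSym N Pl Ca Re) → Prop :=
  Relation.ReflTransGen (Derives1 P)

/-- `L →* w` for a terminal string `w`. -/
def DerivesStr (P : Set (WRule N Pl Ca Re)) (L : N) (w : List (VTerm Pl Ca Re)) : Prop :=
  Derives P [VSym.nt L] (w.map VSym.t)

/-- A PDA state: a set of pairs of nonterminals. -/
abbrev PState (N : Type) := Set (N × N)

/-- A PDA stack: a list of stack symbols `[S, ‹a]` (`[]` is the empty stack `⊥`). -/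
abbrev PStack (N Ca : Type) := List (PState N × Ca)

/-- Acceptance `(S, T) ⇝ w` of a terminal string by a configuration. -/
inductive Accepts (P : Set (WRule N Pl Ca Re)) :
    PState N → PStack N Ca → List (VTerm Pl Ca Re) → Prop
  | bot {S : PState N} {w : List (VTerm Pl Ca Re)} (L1 L2 : N)
      (h : (L1, L2) ∈ S) (hd : DerivesStr P L2 w) :
      Accepts P S [] w
  | push {S S' : PState N} {a : Ca} {T' : PStack N Ca}
      {w1 w2 : List (VTerm Pl Ca Re)} (b : Re) (L1 L2 L3 L4 L5 : N)
      (h34 : (L3, L4) ∈ S) (hd : DerivesStr P L4 w1)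
      (h12 : (L1, L2) ∈ S') (hrule : WRule.mat L2 a L3 b L5 ∈ P)
      (hrec : Accepts P {(L1, L5)} T' w2) :
      Accepts P S ((S', a) :: T') (w1 ++ VTerm.re b :: w2)

/-- The derivative function for a plain symbol `c` (state part). -/
def deltaPlain (P : Set (WRule N Pl Ca Re)) (c : Pl) (S : PState N) : PState N :=
  { q | ∃ L2, (q.1, L2) ∈ S ∧ WRule.plain L2 c q.2 ∈ P }

/-- The derivative function for a call symbol `‹a` (state part). -/
def deltaCall (P : Set (WRule N Pl Ca Re)) (a : Ca) (S : PState N) : PState N :=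
  { q | ∃ L1 L2 L3 L4 b, q = (L3, L3) ∧ (L1, L2) ∈ S ∧ WRule.mat L2 a L3 b L4 ∈ P }

/-- The derivative function for a return symbol `b›` with stack top `[S1, ‹a]` (state part). -/
def deltaRet (P : Set (WRule N Pl Ca Re)) (b : Re) (S S1 : PState N) (a : Ca) : PState N :=
  { q | ∃ L1 L2 L3 L4 L5, q = (L1, L5) ∧ (L1, L2) ∈ S1 ∧ (L3, L4) ∈ S ∧
      WRule.eps L4 ∈ P ∧ WRule.mat L2 a L3 b L5 ∈ P }

/-- One transition of the recognizer PDA (derivative transition). -/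
def step (P : Set (WRule N Pl Ca Re)) (cfg : PState N × PStack N Ca) (i : VTerm Pl Ca Re) :
    Option (PState N × PStack N Ca) :=
  match i, cfg with
  | .pl c, (S, T) => some (deltaPlain P c S, T)
  | .ca a, (S, T) => some (deltaCall P a S, (S, a) :: T)
  | .re b, (S, (S1, a) :: T) => some (deltaRet P b S S1 a, T)
  | .re _, (_, []) => none

/-- Running the recognizer PDA on an input string. -/
def run (P : Set (WRule N Pl Ca Re)) :
    List (VTerm Pl Ca Re) → PState N × PStack N Ca → Option (PState N × PStack N Ca)
  | [], cfg => some cfg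
  | i :: w, cfg =>
    match step P cfg i with
    | none => none
    | some cfg' => run P w cfg'

/-- An acceptance configuration: empty stack and some `(L, L') ∈ S` with `L' → ε`. -/
def AccConfig (P : Set (WRule N Pl Ca Re)) (cfg : PState N × PStack N Ca) : Prop :=
  cfg.2 = [] ∧ ∃ L L', (L, L') ∈ cfg.1 ∧ WRule.eps L' ∈ P

/-- Acceptance of a string by the recognizer PDA constructed from the grammar. -/
def PDAAccepts (P : Set (WRule N Pl Ca Re)) (L0 : N) (w : List (VTerm Pl Ca Re)) : Prop :=
  ∃ cfg, run P w ({(L0, L0)}, []) = some cfg ∧ AccConfig P cfg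


lemma derives1_elim {P : Set (WRule N Pl Ca Re)} {α β : List (VSym N Pl Ca Re)}
    (h : Derives1 P α β) : ∃ r ∈ P, ∃ pre post,
      α = pre ++ VSym.nt r.lhs :: post ∧ β = pre ++ r.rhs ++ post := by
  cases h with
  | step r hr pre post => exact ⟨r, hr, pre, post, rfl, rfl⟩

lemma derives_nil {P : Set (WRule N Pl Ca Re)} {β : List (VSym N Pl Ca Re)}
    (h : Derives P [] β) : β = [] := by
  induction h with
  | refl => rfl
  | tail _ hstep ih =>
    subst ih
    obtain ⟨r, hr, pre, post, heq, -⟩ := derives1_elim hstep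
    exact absurd heq.symm (List.append_ne_nil_of_right_ne_nil pre (by simp))

lemma derives1_cons_t {P : Set (WRule N Pl Ca Re)} {x : VTerm Pl Ca Re}
    {α β : List (VSym N Pl Ca Re)} (h : Derives1 P (VSym.t x :: α) β) :
    ∃ β', β = VSym.t x :: β' ∧ Derives1 P α β' := by
  obtain ⟨r, hr, pre, post, heq, rfl⟩ := derives1_elim h
  cases pre with
  | nil => simp at heq
  | cons s pre' =>
    obtain ⟨hs, hα⟩ : s = VSym.t x ∧ pre' ++ VSym.nt r.lhs :: post = α := by
      constructor
      · exact (by injection heq with h1 _; exact h1.symm)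
      · injection heq with _ h2; exact h2.symm
    subst hs
    exact ⟨pre' ++ r.rhs ++ post, by simp, hα ▸ Derives1.step r hr pre' post⟩

lemma derives_cons_t {P : Set (WRule N Pl Ca Re)} {x : VTerm Pl Ca Re}
    {α β : List (VSym N Pl Ca Re)} (h : Derives P (VSym.t x :: α) β) :
    ∃ β', β = VSym.t x :: β' ∧ Derives P α β' := by
  induction h with
  | refl => exact ⟨α, rfl, Relation.ReflTransGen.refl⟩
  | tail _ hstep ih =>
    obtain ⟨β', rfl, hd⟩ := ih
    obtain ⟨β'', rfl, hstep'⟩ := derives1_cons_t hstep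
    exact ⟨β'', rfl, hd.tail hstep'⟩

lemma derives_nt_cases {P : Set (WRule N Pl Ca Re)} {L : N} {γ : List (VSym N Pl Ca Re)}
    (h : Derives P [VSym.nt L] γ) :
    γ = [VSym.nt L] ∨ ∃ r ∈ P, r.lhs = L ∧ Derives P r.rhs γ := by
  rcases h.cases_head with hrfl | ⟨γ', hstep, hd⟩
  · exact Or.inl hrfl.symm
  · right
    obtain ⟨r, hr, pre, post, heq, rfl⟩ := derives1_elim hstep
    have hpre : pre = [] ∧ (VSym.nt r.lhs : VSym N Pl Ca Re) = VSym.nt L ∧ post = [] := by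
      cases pre with
      | nil => simpa using heq.symm
      | cons s pre' =>
        exfalso
        have := congrArg List.length heq
        simp at this
    obtain ⟨h1, h2, h3⟩ := hpre
    refine ⟨r, hr, VSym.nt.inj h2, ?_⟩
    subst h1 h3
    simpa [Derives] using hd

lemma derivesStr_not_re {P : Set (WRule N Pl Ca Re)} {L : N} {b : Re}
    {w : List (VTerm Pl Ca Re)} (h : DerivesStr P L (VTerm.re b :: w)) : False := by
  rcases derives_nt_cases h with heq | ⟨r, hr, hlhs, hd⟩
  · simp [List.map] at heq
  · cases r with
    | eps L' => exact by simpa [WRule.rhs, List.map] using derives_nil hd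
    | plain L' c L1 =>
      obtain ⟨β', hβ, -⟩ := derives_cons_t hd
      rw [List.map] at hβ
      injection hβ with h1 _
      injection h1 with h2
      cases h2
    | mat L' a L1 b' L2 =>
      obtain ⟨β', hβ, -⟩ := derives_cons_t hd
      rw [List.map] at hβ
      injection hβ with h1 _
      injection h1 with h2
      cases h2

lemma derivesStr_nil_eps {P : Set (WRule N Pl Ca Re)} {L : N}
    (h : DerivesStr P L []) : WRule.eps L ∈ P := by
  rcases derives_nt_cases h with heq | ⟨r, hr, hlhs, hd⟩
  · simp [List.map] at heq
  · cases r with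
    | eps L' => rwa [show L' = L from hlhs] at hr
    | plain L' c L1 =>
      obtain ⟨β', hβ, -⟩ := derives_cons_t hd
      simp [List.map] at hβ
    | mat L' a L1 b' L2 =>
      obtain ⟨β', hβ, -⟩ := derives_cons_t hd
      simp [List.map] at hβ

/-- Correctness of the return-symbol derivative. -/
theorem deltaRet_correct (P : Set (WRule N Pl Ca Re)) (b : Re) (a : Ca)
    (S S1 S' : PState N) (T : PStack N Ca) (w : List (VTerm Pl Ca Re))
    (hS' : S' = deltaRet P b S S1 a) :
    Accepts P S ((S1, a) :: T) (VTerm.re b :: w) ↔ Accepts P S' T w := by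
  subst hS'
  constructor
  · intro h
    generalize hu : VTerm.re b :: w = u at h
    cases h with
    | push b' L1 L2 L3 L4 L5 h34 hd h12 hrule hrec =>
      rename_i w1 w2
      match w1, hu with
      | [], heq =>
        injection heq with h1 h2
        injection h1 with hb
        subst hb h2
        have heps : WRule.eps L4 ∈ P := derivesStr_nil_eps hd
        have hmem : (L1, L5) ∈ deltaRet P b S S1 a :=
          ⟨L1, L2, L3, L4, L5, rfl, h12, h34, heps, hrule⟩
        -- strengthen the recursive acceptance from singleton to deltaRet
        cases hrec with
        | bot L1' L5' hmem' hd' =>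
          have : (L1', L5') = (L1, L5) := hmem'
          injection this with e1 e2
          have hmem2 : (L1', L5') ∈ deltaRet P b S S1 a := by rw [e1, e2]; exact hmem
          exact Accepts.bot L1' L5' hmem2 hd'
        | push b'' M1 M2 M3 M4 M5 h34' hd' h12' hrule' hrec' =>
          have : (M3, M4) = (L1, L5) := h34'
          injection this with e1 e2
          have hmem2 : (M3, M4) ∈ deltaRet P b S S1 a := by rw [e1, e2]; exact hmem
          exact Accepts.push b'' M1 M2 M3 M4 M5 hmem2 hd' h12' hrule' hrec'
      | x :: w1', heq =>
        injection heq with h1 h2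
        subst h1
        exact absurd hd derivesStr_not_re
  · intro h
    have key : ∀ (q : N × N), q ∈ deltaRet P b S S1 a →
        Accepts P {q} T w → Accepts P S ((S1, a) :: T) (VTerm.re b :: w) := by
      rintro ⟨L1, L5⟩ ⟨L1', L2, L3, L4, L5', hq, h12, h34, heps, hrule⟩ hacc
      injection hq with e1 e2
      subst e1 e2
      have hd4 : DerivesStr P L4 [] := by
        have h0 := Derives1.step (P := P) (WRule.eps L4) heps [] []
        simp only [WRule.lhs, WRule.rhs] at h0
        exact Relation.ReflTransGen.single (by simpa using h0)
      exact Accepts.push (w1 := []) b L1 L2 L3 L4 L5 h34 hd4 h12 hrule hacc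
    cases h with
    | bot L1 L5 hmem hd =>
      exact key (L1, L5) hmem (Accepts.bot L1 L5 rfl hd)
    | push b'' M1 M2 M3 M4 M5 h34 hd h12 hrule hrec =>
      exact key (M3, M4) h34 (Accepts.push b'' M1 M2 M3 M4 M5 rfl hd h12 hrule hrec)

end VPG
end

section
/- From small-step to big-step parse-tree derivation: if ([], ⊥) —w→* (v, E), init(v) = L^false, final(v) = L₁^false, and (L₁ → ε) ∈ P, then L^false ⊢ w ↠ v. -/
namespace VPG

/-- Production rules of a general VPG: `L → ε`, `L → i L₁`, or `L → ‹a L₁ b› L₂`. -/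
inductive GRule (N Pl Ca Re : Type) : Type
  | eps (L : N)
  | lin (L : N) (i : VTerm Pl Ca Re) (L1 : N)
  | mat (L : N) (a : Ca) (L1 : N) (b : Re) (L2 : N)

/-- Tagged nonterminals `L^u`. -/
abbrev TN (N : Type) := N × Bool

/-- Parse-tree edges: plain edges `(L^u, c, L₁^u)`, call edges `(L^u, ‹a, L₁^u')`,
pending-return edges `(L^false, b›, L₁^false)`, and matching-return edges
`((L^u, L₁^true), b›, L₂^u)`.  The `dummy` edge `(L^u, _, L^u)` (with a dummy
middle symbol) is used only for the helper initial state of the parser PDA. -/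
inductive PTEdge (N Pl Ca Re : Type) : Type
  | dummy (L : TN N)
  | plain (L : TN N) (c : Pl) (L1 : TN N)
  | call (L : TN N) (a : Ca) (L1 : TN N)
  | retPend (L : TN N) (b : Re) (L1 : TN N)
  | retMat (L L1 : TN N) (b : Re) (L2 : TN N)

variable {N Pl Ca Re : Type}

/-- The well-formedness conditions of a general VPG with respect to the
partition `V = V⁰ ∪ V¹` (where `V0` is the set of well-matched nonterminals). -/
def GWellFormed (V0 : Set N) (P : Set (GRule N Pl Ca Re)) : Prop :=
  (∀ L i L1, GRule.lin L i L1 ∈ P → L ∈ V0 → (∃ c, i = VTerm.pl c) ∧ L1 ∈ V0) ∧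
  (∀ L a L1 b L2, GRule.mat L a L1 b L2 ∈ P → L1 ∈ V0 ∧ (L ∈ V0 → L2 ∈ V0))

/-- The tagged nonterminal in last position of an edge. -/
def PTEdge.dst : PTEdge N Pl Ca Re → TN N
  | .dummy L => L
  | .plain _ _ L1 => L1
  | .call _ _ L1 => L1
  | .retPend _ _ L1 => L1
  | .retMat _ _ _ L2 => L2

/-- The tagged nonterminal in first position of an edge (if the first
position is a single tagged nonterminal). -/
def PTEdge.srcNT : PTEdge N Pl Ca Re → Option (TN N)
  | .dummy L => some L
  | .plain L _ _ => some L
  | .call L _ _ => some L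
  | .retPend L _ _ => some L
  | .retMat _ _ _ _ => none

/-- The pair of tagged nonterminals in first position of a matching-return edge. -/
def PTEdge.srcPair : PTEdge N Pl Ca Re → Option (TN N × TN N)
  | .retMat L L1 _ _ => some (L, L1)
  | _ => none

def PTEdge.IsPlain (e : PTEdge N Pl Ca Re) : Prop := ∃ L c L1, e = PTEdge.plain L c L1
def PTEdge.IsCall (e : PTEdge N Pl Ca Re) : Prop := ∃ L a L1, e = PTEdge.call L a L1
def PTEdge.IsRet (e : PTEdge N Pl Ca Re) : Prop :=
  (∃ L b L1, e = PTEdge.retPend L b L1) ∨ (∃ L L1 b L2, e = PTEdge.retMat L L1 b L2)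

/-- `init(v) = L^u`: the first edge of `v` begins with the tagged nonterminal `L^u`. -/
def initIs (v : List (PTEdge N Pl Ca Re)) (Lu : TN N) : Prop :=
  ∃ e t, v = e :: t ∧ e.srcNT = some Lu

/-- `final(v) = L^u`: the last edge of `v` ends with the tagged nonterminal `L^u`. -/
def finalIs (v : List (PTEdge N Pl Ca Re)) (Lu : TN N) : Prop :=
  ∃ e, v.getLast? = some e ∧ e.dst = Lu

/-- The side condition `v = [] ∨ final(v) = L^u` of the small-step rules. -/
def okEnd (v : List (PTEdge N Pl Ca Re)) (Lu : TN N) : Prop :=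
  v = [] ∨ finalIs v Lu

/-- The big-step parse-tree derivation `L^u ⊢ w ↠ v`. -/
inductive BigStep (P : Set (GRule N Pl Ca Re)) :
    TN N → List (VTerm Pl Ca Re) → List (PTEdge N Pl Ca Re) → Prop
  | eps {L : N} {u : Bool} (h : GRule.eps L ∈ P) :
      BigStep P (L, u) [] []
  | plain {L : N} {u : Bool} {c : Pl} {L1 : N} {w1 v1}
      (h : GRule.lin L (VTerm.pl c) L1 ∈ P) (h1 : BigStep P (L1, u) w1 v1) :
      BigStep P (L, u) (VTerm.pl c :: w1) (PTEdge.plain (L, u) c (L1, u) :: v1)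
  | callPend {L : N} {a : Ca} {L1 : N} {w1 v1}
      (h : GRule.lin L (VTerm.ca a) L1 ∈ P) (h1 : BigStep P (L1, false) w1 v1) :
      BigStep P (L, false) (VTerm.ca a :: w1)
        (PTEdge.call (L, false) a (L1, false) :: v1)
  | retPend {L : N} {b : Re} {L1 : N} {w1 v1}
      (h : GRule.lin L (VTerm.re b) L1 ∈ P) (h1 : BigStep P (L1, false) w1 v1) :
      BigStep P (L, false) (VTerm.re b :: w1)
        (PTEdge.retPend (L, false) b (L1, false) :: v1)
  | mat {L : N} {u : Bool} {a : Ca} {L1 : N} {b : Re} {L2 : N} {w1 w2 v1 v2}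
      (h : GRule.mat L a L1 b L2 ∈ P)
      (h1 : BigStep P (L1, true) w1 v1) (h2 : BigStep P (L2, u) w2 v2) :
      BigStep P (L, u) (VTerm.ca a :: w1 ++ VTerm.re b :: w2)
        (PTEdge.call (L, u) a (L1, true) :: v1 ++
          PTEdge.retMat (L, u) (L1, true) b (L2, u) :: v2)

/-- The small-step parse-tree derivation `(v, E) —i→ (v', E')`, where `E` is a
stack of call edges. -/
inductive SmallStep (P : Set (GRule N Pl Ca Re)) :
    List (PTEdge N Pl Ca Re) × List (PTEdge N Pl Ca Re) → VTerm Pl Ca Re →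
    List (PTEdge N Pl Ca Re) × List (PTEdge N Pl Ca Re) → Prop
  | plain {v E} {L : N} {u : Bool} {c : Pl} {L1 : N}
      (h : GRule.lin L (VTerm.pl c) L1 ∈ P) (hv : okEnd v (L, u)) :
      SmallStep P (v, E) (VTerm.pl c) (v ++ [PTEdge.plain (L, u) c (L1, u)], E)
  | callPend {v E} {L : N} {a : Ca} {L1 : N}
      (h : GRule.lin L (VTerm.ca a) L1 ∈ P) (hv : okEnd v (L, false)) :
      SmallStep P (v, E) (VTerm.ca a)
        (v ++ [PTEdge.call (L, false) a (L1, false)],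
          PTEdge.call (L, false) a (L1, false) :: E)
  | callMat {v E} {L : N} {u : Bool} {a : Ca} {L1 : N} {b : Re} {L2 : N}
      (h : GRule.mat L a L1 b L2 ∈ P) (hv : okEnd v (L, u)) :
      SmallStep P (v, E) (VTerm.ca a)
        (v ++ [PTEdge.call (L, u) a (L1, true)],
          PTEdge.call (L, u) a (L1, true) :: E)
  | retPend {v} {L : N} {b : Re} {L1 : N}
      (h : GRule.lin L (VTerm.re b) L1 ∈ P) (hv : okEnd v (L, false)) :
      SmallStep P (v, []) (VTerm.re b)
        (v ++ [PTEdge.retPend (L, false) b (L1, false)], [])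
  | retMat {v E} {L : N} {u : Bool} {a : Ca} {L1 : N} {b : Re} {L2 L3 : N}
      (h : GRule.mat L a L1 b L2 ∈ P)
      (hv : finalIs v (L3, true)) (he : GRule.eps L3 ∈ P) :
      SmallStep P (v, PTEdge.call (L, u) a (L1, true) :: E) (VTerm.re b)
        (v ++ [PTEdge.retMat (L, u) (L1, true) b (L2, u)], E)
  | retPendPop {v E} {L3 : N} {a : Ca} {L4 L1 : N} {b : Re} {L2 : N}
      (h3 : GRule.lin L3 (VTerm.ca a) L4 ∈ P)
      (h1 : GRule.lin L1 (VTerm.re b) L2 ∈ P) (hv : okEnd v (L1, false)) :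
      SmallStep P (v, PTEdge.call (L3, false) a (L4, false) :: E) (VTerm.re b)
        (v ++ [PTEdge.retPend (L1, false) b (L2, false)], E)

/-- The reflexive-transitive closure `(v, E) —w→* (v', E')` of the small step. -/
inductive SmallSteps (P : Set (GRule N Pl Ca Re)) :
    List (PTEdge N Pl Ca Re) × List (PTEdge N Pl Ca Re) → List (VTerm Pl Ca Re) →
    List (PTEdge N Pl Ca Re) × List (PTEdge N Pl Ca Re) → Prop
  | refl (s) : SmallSteps P s [] s
  | snoc {s s' s''} {w : List (VTerm Pl Ca Re)} {i : VTerm Pl Ca Re}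
      (h1 : SmallSteps P s w s') (h2 : SmallStep P s' i s'') :
      SmallSteps P s (w ++ [i]) s''

/-- `m` contains an edge of the form `(_, _, L^u)`. -/
def endsIn (m : Set (PTEdge N Pl Ca Re)) (Lu : TN N) : Prop :=
  ∃ e ∈ m, e.dst = Lu

/-- The parser transition `p_c` for a plain symbol. -/
def pPlain (P : Set (GRule N Pl Ca Re)) (c : Pl) (m : Set (PTEdge N Pl Ca Re)) :
    Set (PTEdge N Pl Ca Re) :=
  { e | ∃ L u L1, e = PTEdge.plain (L, u) c (L1, u) ∧ endsIn m (L, u) ∧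
      GRule.lin L (VTerm.pl c) L1 ∈ P }

/-- The parser transition `p_‹a` for a call symbol. -/
def pCall (P : Set (GRule N Pl Ca Re)) (a : Ca) (m : Set (PTEdge N Pl Ca Re)) :
    Set (PTEdge N Pl Ca Re) :=
  { e | ∃ L u L1, e = PTEdge.call (L, u) a (L1, true) ∧ endsIn m (L, u) ∧
      ∃ b L2, GRule.mat L a L1 b L2 ∈ P } ∪
  { e | ∃ L L1, e = PTEdge.call (L, false) a (L1, false) ∧ endsIn m (L, false) ∧
      GRule.lin L (VTerm.ca a) L1 ∈ P }

/-- The parser transition `p_b›` for a return symbol, given the stack top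
`mcall` (which is `∅` when the stack is empty). -/
def pRet (P : Set (GRule N Pl Ca Re)) (b : Re) (m mcall : Set (PTEdge N Pl Ca Re)) :
    Set (PTEdge N Pl Ca Re) :=
  { e | ∃ L u L1 L2 a, e = PTEdge.retMat (L, u) (L1, true) b (L2, u) ∧
      PTEdge.call (L, u) a (L1, true) ∈ mcall ∧ GRule.mat L a L1 b L2 ∈ P } ∪
  { e | ∃ L L1, e = PTEdge.retPend (L, false) b (L1, false) ∧ endsIn m (L, false) ∧
      GRule.lin L (VTerm.re b) L1 ∈ P }

/-- The runtime transition `𝒫(i, m, T)` of the parser PDA. -/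
def pdaStep (P : Set (GRule N Pl Ca Re)) (i : VTerm Pl Ca Re)
    (cfg : Set (PTEdge N Pl Ca Re) × List (Set (PTEdge N Pl Ca Re))) :
    Set (PTEdge N Pl Ca Re) × List (Set (PTEdge N Pl Ca Re)) :=
  match i, cfg with
  | .pl c, (m, T) => (pPlain P c m, T)
  | .ca a, (m, T) => (pCall P a m, pCall P a m :: T)
  | .re b, (m, []) => (pRet P b m ∅, [])
  | .re b, (m, mc :: T) => (pRet P b m mc, T)

/-- The trace `[m₁, …, m_n]` of parser PDA states along an input string. -/
def pdaTrace (P : Set (GRule N Pl Ca Re)) :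
    List (VTerm Pl Ca Re) → Set (PTEdge N Pl Ca Re) × List (Set (PTEdge N Pl Ca Re)) →
    List (Set (PTEdge N Pl Ca Re))
  | [], _ => []
  | i :: w, cfg => (pdaStep P i cfg).1 :: pdaTrace P w (pdaStep P i cfg)

/-- Connection of parse trees, `v₁ ⋄ v₂`. -/
def Connects (v1 v2 : List (PTEdge N Pl Ca Re)) : Prop :=
  ∃ e1 e2 t2, v1.getLast? = some e1 ∧ v2 = e2 :: t2 ∧
    (e2.srcNT = some e1.dst ∨
      ∃ Lu, e1.srcNT = some Lu ∧ e2.srcPair = some (Lu, e1.dst))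

/-- Parse-tree sets: sets of parse trees paired with stacks of call edges. -/
abbrev PTSet (N Pl Ca Re : Type) :=
  Set (List (PTEdge N Pl Ca Re) × List (PTEdge N Pl Ca Re))

/-- The helper function `F₁`, converting the first state of a parse forest to
the initial parse-tree set. -/
def F1 (m : Set (PTEdge N Pl Ca Re)) : PTSet N Pl Ca Re :=
  { p | ∃ e ∈ m,
      (e.IsCall ∧ p = ([e], [e])) ∨
      ((e.IsPlain ∨ e.IsRet) ∧ (∃ L, e.dst = (L, false)) ∧ p = ([e], [])) }

/-- The helper function `F`, extending a parse-tree set by one state of the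
parse forest. -/
def Fstep (P : Set (GRule N Pl Ca Re)) (V : PTSet N Pl Ca Re)
    (m : Set (PTEdge N Pl Ca Re)) : PTSet N Pl Ca Re :=
  { p | ∃ v E e, (v, E) ∈ V ∧ e ∈ m ∧ e.IsPlain ∧ Connects v [e] ∧
      p = (v ++ [e], E) } ∪
  { p | ∃ v E e, (v, E) ∈ V ∧ e ∈ m ∧ e.IsCall ∧ Connects v [e] ∧
      p = (v ++ [e], e :: E) } ∪
  { p | ∃ v E' e, e ∈ m ∧ e.IsRet ∧ Connects v [e] ∧
      ((∃ e', (v, e' :: E') ∈ V) ∨ ((v, []) ∈ V ∧ E' = [])) ∧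
      p = (v ++ [e], E') } ∪
  { p | ∃ v e' E' e L, e ∈ m ∧ e.IsRet ∧ (v, e' :: E') ∈ V ∧
      finalIs v (L, true) ∧ GRule.eps L ∈ P ∧ Connects [e'] [e] ∧
      p = (v ++ [e], E') }

/-- The extractor: `extract([m₁, …, m_n]) = F(… F(F₁(m₁), m₂) …, m_n)`. -/
def extract (P : Set (GRule N Pl Ca Re)) :
    List (Set (PTEdge N Pl Ca Re)) → PTSet N Pl Ca Re
  | [] => ∅
  | m :: ms => ms.foldl (Fstep P) (F1 m)

/-- The invariants `Inv(L, w, m, T, V)` of VPG parsing. -/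
def Inv (P : Set (GRule N Pl Ca Re)) (Lu : TN N) (w : List (VTerm Pl Ca Re))
    (m : Set (PTEdge N Pl Ca Re)) (T : List (Set (PTEdge N Pl Ca Re)))
    (V : PTSet N Pl Ca Re) : Prop :=
  (∀ v E, (v, E) ∈ V ↔ (SmallSteps P ([], []) w (v, E) ∧ initIs v Lu)) ∧
  (∀ v E, (v, E) ∈ V →
    (E = [] → T = []) ∧ (∀ e E', E = e :: E' → ∃ mt Tt, T = mt :: Tt ∧ e ∈ mt)) ∧
  (∀ v, (∃ E, (v, E) ∈ V) → ∃ e ∈ m, v.getLast? = some e)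


/-! ### Auxiliary development for Statement 17 -/

section Aux

variable {P : Set (GRule N Pl Ca Re)}

lemma finalIs_concat (v : List (PTEdge N Pl Ca Re)) (e : PTEdge N Pl Ca Re) (X : TN N) :
    finalIs (v ++ [e]) X ↔ e.dst = X := by
  simp [finalIs, List.getLast?_concat]

lemma finalIs_det {v : List (PTEdge N Pl Ca Re)} {X Y : TN N}
    (h1 : finalIs v X) (h2 : finalIs v Y) : X = Y := by
  obtain ⟨e, he, hd⟩ := h1
  obtain ⟨e', he', hd'⟩ := h2
  rw [he] at he'
  cases he'
  exact hd ▸ hd' ▸ rfl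

lemma initIs_det {v : List (PTEdge N Pl Ca Re)} {X Y : TN N}
    (h1 : initIs v X) (h2 : initIs v Y) : X = Y := by
  obtain ⟨e, t, rfl, hs⟩ := h1
  obtain ⟨e', t', he', hs'⟩ := h2
  cases he'
  rw [hs] at hs'
  exact Option.some.inj hs'

lemma initIs_ne_nil {v : List (PTEdge N Pl Ca Re)} {X : TN N} (h : initIs v X) : v ≠ [] := by
  obtain ⟨e, t, rfl, -⟩ := h; simp

lemma initIs_concat {v : List (PTEdge N Pl Ca Re)} {e : PTEdge N Pl Ca Re} {A : TN N}
    (h : initIs v A) : initIs (v ++ [e]) A := by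
  obtain ⟨e0, t, rfl, hs⟩ := h
  exact ⟨e0, t ++ [e], rfl, hs⟩

lemma okEnd_det {v : List (PTEdge N Pl Ca Re)} {Lu X : TN N}
    (hne : v ≠ []) (h : okEnd v Lu) (hf : finalIs v X) : X = Lu := by
  cases h with
  | inl h => exact absurd h hne
  | inr h => exact finalIs_det hf h

/-- Open (partial) big-step derivations: `Part P A w v X` means that starting from the
tagged nonterminal `A` one can derive the word `w` producing the parse tree `v`,
ending in the "open" tagged nonterminal `X` that still remains to be expanded. -/
inductive Part (P : Set (GRule N Pl Ca Re)) :
    TN N → List (VTerm Pl Ca Re) → List (PTEdge N Pl Ca Re) → TN N → Prop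
  | nil (X : TN N) : Part P X [] [] X
  | plain {L : N} {u : Bool} {c : Pl} {L1 : N} {w v X}
      (h : GRule.lin L (VTerm.pl c) L1 ∈ P) (h1 : Part P (L1, u) w v X) :
      Part P (L, u) (VTerm.pl c :: w) (PTEdge.plain (L, u) c (L1, u) :: v) X
  | callPend {L : N} {a : Ca} {L1 : N} {w v X}
      (h : GRule.lin L (VTerm.ca a) L1 ∈ P) (h1 : Part P (L1, false) w v X) :
      Part P (L, false) (VTerm.ca a :: w) (PTEdge.call (L, false) a (L1, false) :: v) X
  | retPend {L : N} {b : Re} {L1 : N} {w v X}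
      (h : GRule.lin L (VTerm.re b) L1 ∈ P) (h1 : Part P (L1, false) w v X) :
      Part P (L, false) (VTerm.re b :: w) (PTEdge.retPend (L, false) b (L1, false) :: v) X
  | mat {L : N} {u : Bool} {a : Ca} {L1 : N} {b : Re} {L2 : N} {w1 v1 w2 v2 X}
      (h : GRule.mat L a L1 b L2 ∈ P)
      (h1 : BigStep P (L1, true) w1 v1) (h2 : Part P (L2, u) w2 v2 X) :
      Part P (L, u) (VTerm.ca a :: w1 ++ VTerm.re b :: w2)
        (PTEdge.call (L, u) a (L1, true) :: v1 ++
          PTEdge.retMat (L, u) (L1, true) b (L2, u) :: v2) X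

lemma part_tag {A X : TN N} {w v} (h : Part P A w v X) : A.2 = X.2 := by
  induction h <;> simp_all

lemma partPart {A B C : TN N} {w v w' v'} (h : Part P A w v B) (h' : Part P B w' v' C) :
    Part P A (w ++ w') (v ++ v') C := by
  induction h with
  | nil => simpa using h'
  | plain h h1 ih => simpa using Part.plain h (ih h')
  | callPend h h1 ih => simpa using Part.callPend h (ih h')
  | retPend h h1 ih => simpa using Part.retPend h (ih h')
  | mat h h1 h2 ih => simpa using Part.mat h h1 (ih h')

lemma partBig {A B : TN N} {w v w' v'} (h : Part P A w v B) (h' : BigStep P B w' v') :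
    BigStep P A (w ++ w') (v ++ v') := by
  induction h with
  | nil => simpa using h'
  | plain h h1 ih => simpa using BigStep.plain h (ih h')
  | callPend h h1 ih => simpa using BigStep.callPend h (ih h')
  | retPend h h1 ih => simpa using BigStep.retPend h (ih h')
  | mat h h1 h2 ih => simpa using BigStep.mat h h1 (ih h')

lemma partClose {B : TN N} {w v} {L3 : N} {u : Bool}
    (h : Part P B w v (L3, u)) (he : GRule.eps L3 ∈ P) : BigStep P B w v := by
  simpa using partBig h (BigStep.eps (u := u) he)

/-- Decomposition of a reachable small-step configuration along its stack:
`Frame P A w v E X` means `v` splits at the (unreturned) call edges recorded in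
the stack `E`, with open partial derivations between consecutive call edges. -/
inductive Frame (P : Set (GRule N Pl Ca Re)) :
    TN N → List (VTerm Pl Ca Re) → List (PTEdge N Pl Ca Re) →
    List (PTEdge N Pl Ca Re) → TN N → Prop
  | base {A : TN N} {w v X} (h : Part P A w v X) : Frame P A w v [] X
  | matCall {A : TN N} {w0 v0 E} {L : N} {u : Bool} {a : Ca} {L1 : N} {w1 v1 X}
      (hF : Frame P A w0 v0 E (L, u)) (h1 : Part P (L1, true) w1 v1 X) :
      Frame P A (w0 ++ VTerm.ca a :: w1)
        (v0 ++ PTEdge.call (L, u) a (L1, true) :: v1)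
        (PTEdge.call (L, u) a (L1, true) :: E) X
  | pendCall {A : TN N} {w0 v0 E} {L : N} {a : Ca} {L1 : N} {w1 v1 X}
      (hF : Frame P A w0 v0 E (L, false))
      (h : GRule.lin L (VTerm.ca a) L1 ∈ P) (h1 : Part P (L1, false) w1 v1 X) :
      Frame P A (w0 ++ VTerm.ca a :: w1)
        (v0 ++ PTEdge.call (L, false) a (L1, false) :: v1)
        (PTEdge.call (L, false) a (L1, false) :: E) X

lemma framePart {A X Y : TN N} {w v E w' v'} (hF : Frame P A w v E X)
    (hp : Part P X w' v' Y) : Frame P A (w ++ w') (v ++ v') E Y := by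
  induction hF with
  | base h => exact Frame.base (partPart h hp)
  | matCall hF h1 ih => simpa using Frame.matCall hF (partPart h1 hp)
  | pendCall hF h h1 ih => simpa using Frame.pendCall hF h (partPart h1 hp)

lemma frameClose {A X : TN N} {w v E} (hF : Frame P A w v E X) :
    ∀ w' v', X.2 = false → BigStep P X w' v' → BigStep P A (w ++ w') (v ++ v') := by
  induction hF with
  | base h =>
    intro w' v' _ hb
    exact partBig h hb
  | matCall hF h1 ih =>
    intro w' v' htag hb
    have := part_tag h1
    simp [htag] at this
  | pendCall hF h h1 ih =>
    intro w' v' htag hb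
    have hb1 : BigStep P _ (_ ++ w') (_ ++ v') := partBig h1 hb
    have hb2 := BigStep.callPend h hb1
    simpa using ih _ _ rfl hb2

/-- Every reachable small-step configuration admits a `Frame` decomposition. -/
lemma reach_frame {w : List (VTerm Pl Ca Re)}
    {s : List (PTEdge N Pl Ca Re) × List (PTEdge N Pl Ca Re)}
    (hst : SmallSteps P ([], []) w s) :
    (s = (([] : List (PTEdge N Pl Ca Re)), ([] : List (PTEdge N Pl Ca Re))) ∧ w = []) ∨
    ∃ A X, Frame P A w s.1 s.2 X ∧ initIs s.1 A ∧ finalIs s.1 X := by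
  induction hst with
  | refl => exact Or.inl ⟨rfl, rfl⟩
  | @snoc s' s'' w i hpre h2 ih =>
    cases h2 with
    | @plain v E L u c L1 h hv =>
      rcases ih with ⟨heq, rfl⟩ | ⟨A, X, hF, hi, hf⟩
      · obtain ⟨rfl, rfl⟩ := Prod.mk.injEq .. ▸ heq
        refine Or.inr ⟨(L, u), (L1, u), ?_, ⟨_, _, rfl, rfl⟩, ?_⟩
        · simpa using Frame.base (Part.plain h (Part.nil _))
        · exact (finalIs_concat _ _ _).mpr rfl
      · have hvne : v ≠ [] := initIs_ne_nil hi
        obtain rfl : X = (L, u) := okEnd_det hvne hv hf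
        refine Or.inr ⟨A, (L1, u), ?_, initIs_concat hi, (finalIs_concat _ _ _).mpr rfl⟩
        simpa using framePart hF (Part.plain h (Part.nil _))
    | @callPend v E L a L1 h hv =>
      rcases ih with ⟨heq, rfl⟩ | ⟨A, X, hF, hi, hf⟩
      · obtain ⟨rfl, rfl⟩ := Prod.mk.injEq .. ▸ heq
        refine Or.inr ⟨(L, false), (L1, false), ?_, ⟨_, _, rfl, rfl⟩, ?_⟩
        · simpa using Frame.pendCall (Frame.base (Part.nil _)) h (Part.nil _)
        · exact (finalIs_concat _ _ _).mpr rfl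
      · have hvne : v ≠ [] := initIs_ne_nil hi
        obtain rfl : X = (L, false) := okEnd_det hvne hv hf
        refine Or.inr ⟨A, (L1, false), ?_, initIs_concat hi, (finalIs_concat _ _ _).mpr rfl⟩
        simpa using Frame.pendCall hF h (Part.nil _)
    | @callMat v E L u a L1 b L2 h hv =>
      rcases ih with ⟨heq, rfl⟩ | ⟨A, X, hF, hi, hf⟩
      · obtain ⟨rfl, rfl⟩ := Prod.mk.injEq .. ▸ heq
        refine Or.inr ⟨(L, u), (L1, true), ?_, ⟨_, _, rfl, rfl⟩, ?_⟩
        · simpa using Frame.matCall (a := a) (Frame.base (Part.nil _)) (Part.nil _)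
        · exact (finalIs_concat _ _ _).mpr rfl
      · have hvne : v ≠ [] := initIs_ne_nil hi
        obtain rfl : X = (L, u) := okEnd_det hvne hv hf
        refine Or.inr ⟨A, (L1, true), ?_, initIs_concat hi, (finalIs_concat _ _ _).mpr rfl⟩
        simpa using Frame.matCall (a := a) hF (Part.nil _)
    | @retPend v L b L1 h hv =>
      rcases ih with ⟨heq, rfl⟩ | ⟨A, X, hF, hi, hf⟩
      · obtain ⟨rfl, -⟩ := Prod.mk.injEq .. ▸ heq
        refine Or.inr ⟨(L, false), (L1, false), ?_, ⟨_, _, rfl, rfl⟩, ?_⟩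
        · simpa using Frame.base (Part.retPend h (Part.nil _))
        · exact (finalIs_concat _ _ _).mpr rfl
      · have hvne : v ≠ [] := initIs_ne_nil hi
        obtain rfl : X = (L, false) := okEnd_det hvne hv hf
        refine Or.inr ⟨A, (L1, false), ?_, initIs_concat hi, (finalIs_concat _ _ _).mpr rfl⟩
        simpa using framePart hF (Part.retPend h (Part.nil _))
    | @retMat v E L u a L1 b L2 L3 h hv he =>
      clear hpre
      rcases ih with ⟨heq, rfl⟩ | ⟨A, X, hF, hi, hf⟩
      · simp at heq
      · obtain rfl : X = (L3, true) := finalIs_det hf hv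
        cases hF with
        | matCall hF' h1 =>
          have big1 : BigStep P (L1, true) _ _ := partClose h1 he
          have part1 := Part.mat (u := u) h big1 (Part.nil (L2, u))
          refine Or.inr ⟨A, (L2, u), ?_, initIs_concat hi, (finalIs_concat _ _ _).mpr rfl⟩
          simpa using framePart hF' part1
    | @retPendPop v E L3 a L4 L1 b L2 h3 hret hv =>
      clear hpre
      rcases ih with ⟨heq, rfl⟩ | ⟨A, X, hF, hi, hf⟩
      · simp at heq
      · cases hF with
        | pendCall hF' hlin hp =>
          have hvne : _ ≠ ([] : List (PTEdge N Pl Ca Re)) := initIs_ne_nil hi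
          obtain rfl : X = (L1, false) := okEnd_det hvne hv hf
          have part1 : Part P (L3, false) _ _ (L2, false) :=
            Part.callPend h3 (partPart hp (Part.retPend hret (Part.nil _)))
          refine Or.inr ⟨A, (L2, false), ?_, initIs_concat hi, (finalIs_concat _ _ _).mpr rfl⟩
          simpa using framePart hF' part1

end Aux

/-- From small-step to big-step parse-tree derivation. -/
theorem small_to_big (P : Set (GRule N Pl Ca Re)) (V0 : Set N)
    (hwf : GWellFormed V0 P) (L L1 : N) (w : List (VTerm Pl Ca Re))
    (v E : List (PTEdge N Pl Ca Re))
    (hsteps : SmallSteps P ([], []) w (v, E))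
    (hinit : initIs v (L, false))
    (hfinal : finalIs v (L1, false))
    (heps : GRule.eps L1 ∈ P) :
    BigStep P (L, false) w v := by
  rcases reach_frame hsteps with ⟨heq, rfl⟩ | ⟨A, X, hF, hi, hf⟩
  · obtain ⟨rfl, rfl⟩ := Prod.mk.injEq .. ▸ heq
    exact absurd rfl (initIs_ne_nil hinit)
  · obtain rfl : A = (L, false) := initIs_det hi hinit
    obtain rfl : X = (L1, false) := finalIs_det hf hfinal
    simpa using frameClose hF [] [] rfl (BigStep.eps heps)

end VPG
end
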